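/- If x⁺ ∈ S, then S is an explanation of ⟨H', M', T'⟩ if and only if S \ {x⁺} is an explanation of ⟨H, M, T|_{x=true}⟩; the set of formulas S ∪ T' is logically equivalent to (S \ {x⁺}) ∪ T|_{x=true} ∪ {¬x⁻, q, x, x⁺}. -/
import Mathlib


/-- Propositional formulas over variables indexed by `Nat`. -/
inductive Fm where
  | var : Nat → Fm
  | tru : Fm
  | fls : Fm
  | neg : Fm → Fm
  | conj : Fm → Fm → Fm
  | disj : Fm → Fm → Fm
deriving DecidableEq

/-- Evaluation of a formula under an assignment. -/
def Fm.eval (σ : Nat → Bool) : Fm → Bool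
  | .var n => σ n
  | .tru => true
  | .fls => false
  | .neg F => !(F.eval σ)
  | .conj F G => F.eval σ && G.eval σ
  | .disj F G => F.eval σ || G.eval σ

/-- `F.subst x v` replaces every occurrence of variable `x` by the constant `v`. -/
def Fm.subst (x : Nat) (v : Bool) : Fm → Fm
  | .var n => if n = x then (if v then .tru else .fls) else .var n
  | .tru => .tru
  | .fls => .fls
  | .neg F => .neg (F.subst x v)
  | .conj F G => .conj (F.subst x v) (G.subst x v)
  | .disj F G => .disj (F.subst x v) (G.subst x v)

/-- `F.occurs x` : variable `x` occurs in `F`. -/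
def Fm.occurs (x : Nat) : Fm → Prop
  | .var n => n = x
  | .tru => False
  | .fls => False
  | .neg F => F.occurs x
  | .conj F G => F.occurs x ∨ G.occurs x
  | .disj F G => F.occurs x ∨ G.occurs x

/-- `σ` satisfies the set of variables `S` (as positive unit assumptions)
together with the theory `T`. -/
def SatSet (σ : Nat → Bool) (S : Set Nat) (T : Set Fm) : Prop :=
  (∀ n ∈ S, σ n = true) ∧ (∀ f ∈ T, f.eval σ = true)

/-- `S` is an explanation of the abduction instance `⟨H, M, T⟩`:
`S ⊆ H`, `S ∪ T` is consistent, and `S ∪ T` entails every manifestation in `M`. -/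
def IsExplanation (H M : Set Nat) (T : Set Fm) (S : Set Nat) : Prop :=
  S ⊆ H ∧ (∃ σ, SatSet σ S T) ∧ (∀ σ, SatSet σ S T → ∀ m ∈ M, σ m = true)

/-- Material implication as a formula. -/
def Fm.impl (f g : Fm) : Fm := .disj (.neg f) g

/-- The merged hypotheses `H' = H ∪ {x⁺, x⁻}`. -/
def mergedH (H : Set Nat) (xp xm : Nat) : Set Nat := H ∪ {xp, xm}

/-- The merged manifestations `M' = M ∪ {q}`. -/
def mergedM (M : Set Nat) (q : Nat) : Set Nat := M ∪ {q}

/-- The merged theory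
`T' = T ∪ {x⁺ → q, x⁻ → q, x⁺ → x, x⁻ → ¬x, ¬x⁺ ∨ ¬x⁻}`. -/
def mergedT (T : Set Fm) (x xp xm q : Nat) : Set Fm :=
  T ∪ {Fm.impl (.var xp) (.var q), Fm.impl (.var xm) (.var q),
       Fm.impl (.var xp) (.var x), Fm.impl (.var xm) (.neg (.var x)),
       .disj (.neg (.var xp)) (.neg (.var xm))}


lemma eval_agree {F : Fm} {σ τ : Nat → Bool} (h : ∀ n, F.occurs n → σ n = τ n) :
    F.eval σ = F.eval τ := by
  induction F with
  | var n => exact h n rfl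
  | tru => rfl
  | fls => rfl
  | neg F ih => simp [Fm.eval, ih (fun n hn => h n hn)]
  | conj F G ihF ihG =>
      simp [Fm.eval, ihF (fun n hn => h n (Or.inl hn)), ihG (fun n hn => h n (Or.inr hn))]
  | disj F G ihF ihG =>
      simp [Fm.eval, ihF (fun n hn => h n (Or.inl hn)), ihG (fun n hn => h n (Or.inr hn))]

lemma eval_subst (x : Nat) (v : Bool) (F : Fm) (σ : Nat → Bool) :
    (F.subst x v).eval σ = F.eval (fun n => if n = x then v else σ n) := by
  induction F with
  | var n =>
      by_cases h : n = x <;> simp [Fm.subst, Fm.eval, h] <;> cases v <;> simp [Fm.eval]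
  | tru => rfl
  | fls => rfl
  | neg F ih => simp [Fm.subst, Fm.eval, ih]
  | conj F G ihF ihG => simp [Fm.subst, Fm.eval, ihF, ihG]
  | disj F G ihF ihG => simp [Fm.subst, Fm.eval, ihF, ihG]

/-- if `x⁺ ∈ S`, then `S` is an explanation of the merged instance
iff `S \ {x⁺}` is an explanation of `⟨H, M, T|_{x=true}⟩`; moreover `S ∪ T'` is
logically equivalent to `(S \ {x⁺}) ∪ T|_{x=true} ∪ {¬x⁻, q, x, x⁺}`. -/
theorem abduction_merged_pos_case (x xp xm q : Nat) (H M : Set Nat) (T : Set Fm)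
    (hdist : x ≠ xp ∧ x ≠ xm ∧ x ≠ q ∧ xp ≠ xm ∧ xp ≠ q ∧ xm ≠ q)
    (hxH : x ∉ H) (hxM : x ∉ M)
    (hxpF : xp ∉ H ∧ xp ∉ M ∧ ∀ f ∈ T, ¬ f.occurs xp)
    (hxmF : xm ∉ H ∧ xm ∉ M ∧ ∀ f ∈ T, ¬ f.occurs xm)
    (hqF : q ∉ H ∧ q ∉ M ∧ ∀ f ∈ T, ¬ f.occurs q) (S : Set Nat) (hxpS : xp ∈ S) :
    (IsExplanation (mergedH H xp xm) (mergedM M q) (mergedT T x xp xm q) S ↔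
      IsExplanation H M ((Fm.subst x true) '' T) (S \ {xp})) ∧
    (∀ σ, SatSet σ S (mergedT T x xp xm q) ↔
      SatSet σ (S \ {xp})
        ((Fm.subst x true) '' T ∪ {.neg (.var xm), .var q, .var x, .var xp})) := by

  obtain ⟨hxxp, hxxm, hxq, hpm, hpq, hmq⟩ := hdist
  obtain ⟨hpH, hpM, hpT⟩ := hxpF
  obtain ⟨hmH, hmM, hmT⟩ := hxmF
  obtain ⟨hqH, hqM, hqT⟩ := hqF
  -- the key pointwise equivalence (second conjunct)
  have key : ∀ σ, SatSet σ S (mergedT T x xp xm q) ↔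
      SatSet σ (S \ {xp})
        ((Fm.subst x true) '' T ∪ {.neg (.var xm), .var q, .var x, .var xp}) := by
    intro σ
    constructor
    · rintro ⟨hS, hT⟩
      have hσxp : σ xp = true := hS xp hxpS
      have hxpq : σ q = true := by
        have := hT (Fm.impl (.var xp) (.var q)) (by simp [mergedT])
        simp [Fm.impl, Fm.eval, hσxp] at this
        exact this
      have hσx : σ x = true := by
        have := hT (Fm.impl (.var xp) (.var x)) (by simp [mergedT])
        simp [Fm.impl, Fm.eval, hσxp] at this
        exact this
      have hσxm : σ xm = false := by
        have := hT (Fm.disj (.neg (.var xp)) (.neg (.var xm))) (by simp [mergedT])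
        simp [Fm.eval, hσxp] at this
        exact this
      refine ⟨fun n hn => hS n hn.1, ?_⟩
      rintro f (⟨g, hg, rfl⟩ | hf)
      · rw [eval_subst]
        rw [eval_agree (τ := σ) (fun n _ => by
          by_cases h : n = x <;> simp [h, hσx])]
        exact hT g (Or.inl hg)
      · simp only [Set.mem_insert_iff, Set.mem_singleton_iff] at hf
        rcases hf with rfl | rfl | rfl | rfl <;> simp [Fm.eval, hσxm, hxpq, hσx, hσxp]
    · rintro ⟨hS, hT⟩
      have hσxp : σ xp = true := by
        have := hT (.var xp) (by simp)
        simpa [Fm.eval] using this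
      have hσq : σ q = true := by
        have := hT (.var q) (by simp)
        simpa [Fm.eval] using this
      have hσx : σ x = true := by
        have := hT (.var x) (by simp)
        simpa [Fm.eval] using this
      have hσxm : σ xm = false := by
        have := hT (.neg (.var xm)) (by simp)
        simpa [Fm.eval] using this
      refine ⟨fun n hn => ?_, ?_⟩
      · by_cases h : n = xp
        · simp [h, hσxp]
        · exact hS n ⟨hn, h⟩
      · rintro f (hf | hf)
        · have := hT (f.subst x true) (Or.inl ⟨f, hf, rfl⟩)
          rw [eval_subst] at this
          rw [eval_agree (τ := fun n => if n = x then true else σ n) (fun n _ => by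
            by_cases h : n = x <;> simp [h, hσx])]
          exact this
        · simp only [Set.mem_insert_iff, Set.mem_singleton_iff, mergedT] at hf
          rcases hf with rfl | rfl | rfl | rfl | rfl <;>
            simp [Fm.impl, Fm.eval, hσxm, hσq, hσx, hσxp]
  refine ⟨?_, key⟩
  -- a builder: extend a model of the reduced instance to the merged one
  have build : ∀ τ : Nat → Bool, SatSet τ (S \ {xp}) ((Fm.subst x true) '' T) →
      S \ {xp} ⊆ H →
      SatSet (fun n => if n = xp then true else if n = xm then false else
        if n = q then true else if n = x then true else τ n) S (mergedT T x xp xm q) := by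
    intro τ ⟨hτS, hτT⟩ hsub
    set σ' : Nat → Bool := fun n => if n = xp then true else if n = xm then false else
      if n = q then true else if n = x then true else τ n with hσ'
    refine ⟨fun n hn => ?_, ?_⟩
    · by_cases h : n = xp
      · simp [hσ', h]
      · have hnH : n ∈ H := hsub ⟨hn, h⟩
        have h1 : n ≠ xm := fun e => hmH (e ▸ hnH)
        have h2 : n ≠ q := fun e => hqH (e ▸ hnH)
        have h3 : n ≠ x := fun e => hxH (e ▸ hnH)
        simp [hσ', h, h1, h2, h3]
        exact hτS n ⟨hn, h⟩
    · rintro f (hf | hf)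
      · have := hτT (f.subst x true) ⟨f, hf, rfl⟩
        rw [eval_subst] at this
        rw [eval_agree (σ := σ') (τ := fun n => if n = x then true else τ n) (fun n hn => by
          have h1 : n ≠ xp := fun e => hpT f hf (e ▸ hn)
          have h2 : n ≠ xm := fun e => hmT f hf (e ▸ hn)
          have h3 : n ≠ q := fun e => hqT f hf (e ▸ hn)
          by_cases h : n = x <;> simp [hσ', h, h1, h2, h3] <;> omega)]
        exact this
      · simp only [Set.mem_insert_iff, Set.mem_singleton_iff, mergedT] at hf
        rcases hf with rfl | rfl | rfl | rfl | rfl <;>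
          simp [Fm.impl, Fm.eval, hσ'] <;> omega
  constructor
  · rintro ⟨hsub, ⟨σ, hσ⟩, hent⟩
    -- xm ∉ S
    have hσxm : σ xm = false := by
      have := hσ.2 (Fm.disj (.neg (.var xp)) (.neg (.var xm))) (by simp [mergedT])
      simp [Fm.eval, hσ.1 xp hxpS] at this
      exact this
    have hxmS : xm ∉ S := fun h => by simp [hσ.1 xm h] at hσxm
    have hsub' : S \ {xp} ⊆ H := by
      rintro n ⟨hn, hnp⟩
      rcases hsub hn with h | h
      · exact h
      · simp only [Set.mem_insert_iff, Set.mem_singleton_iff] at h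
        rcases h with rfl | rfl
        · exact absurd rfl hnp
        · exact absurd hn hxmS
    refine ⟨hsub', ⟨σ, ?_⟩, ?_⟩
    · have := (key σ).mp hσ
      exact ⟨this.1, fun f hf => this.2 f (Or.inl hf)⟩
    · intro τ hτ m hm
      have hστ := build τ hτ hsub'
      have := hent _ hστ m (Or.inl hm)
      have h1 : m ≠ xp := fun e => hpM (e ▸ hm)
      have h2 : m ≠ xm := fun e => hmM (e ▸ hm)
      have h3 : m ≠ q := fun e => hqM (e ▸ hm)
      have h4 : m ≠ x := fun e => hxM (e ▸ hm)
      simpa [h1, h2, h3, h4] using this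
  · rintro ⟨hsub, ⟨τ, hτ⟩, hent⟩
    refine ⟨?_, ⟨_, build τ hτ hsub⟩, ?_⟩
    · intro n hn
      by_cases h : n = xp
      · exact Or.inr (by simp [h])
      · exact Or.inl (hsub ⟨hn, h⟩)
    · intro σ hσ m hm
      rcases hm with hm | hm
      · have := (key σ).mp hσ
        exact hent σ ⟨this.1, fun f hf => this.2 f (Or.inl hf)⟩ m hm
      · simp only [Set.mem_singleton_iff] at hm
        rw [hm]
        have := hσ.2 (Fm.impl (.var xp) (.var q)) (by simp [mergedT])
        simp [Fm.impl, Fm.eval, hσ.1 xp hxpS] at this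
        exact this
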